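/- arXiv:1809.05550 — 7 statements merged into one kernel-verified Lean document; each statement's English description precedes it below -/
import Mathlib

section
/- Let Y be a finite set, h g : Y → ℝ with g(y) ≥ 0 for all y, and λ > 0. Define K(λ) = max_{y∈Y} (h(y) + λ·g(y)). Then for every y ∈ Y, h(y)·g(y) ≤ K(λ)²/(4λ). -/
theorem stmt4 {Y : Type*} [Fintype Y] [Nonempty Y] (h g : Y → ℝ)
    (hg : ∀ y : Y, 0 ≤ g y) (l : ℝ) (hl : 0 < l) :
    ∀ y : Y, h y * g y ≤
      (Finset.univ.sup' Finset.univ_nonempty (fun y : Y => h y + l * g y)) ^ 2 /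
        (4 * l) := by
  intro y
  set K := Finset.univ.sup' Finset.univ_nonempty (fun y : Y => h y + l * g y) with hK
  have hyK : h y + l * g y ≤ K := Finset.le_sup' (fun y : Y => h y + l * g y) (Finset.mem_univ y)
  have h4l : 0 < 4 * l := by linarith
  rcases le_or_gt (h y * g y) 0 with hle | hpos
  · have : 0 ≤ K ^ 2 / (4 * l) := div_nonneg (sq_nonneg _) h4l.le
    linarith
  · have hpos' : 0 < h y + l * g y := by
      rcases mul_pos_iff.mp hpos with ⟨h1, h2⟩ | ⟨h1, h2⟩
      · nlinarith
      · linarith [hg y]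
    have hsq : (h y + l * g y) ^ 2 ≤ K ^ 2 := by
      nlinarith
    rw [le_div_iff₀ h4l]
    nlinarith [sq_nonneg (h y - l * g y)]
end

section
/- For every ε > 0 and every Ĥ > 0, Ĝ > 0, there exists a set Y of 3 points in ℝ² with coordinates (h, g), g ≥ 0, such that max_y h(y)·g(y) ≥ (1/4)·Ĥ·Ĝ, yet for every λ ≥ 0 every maximizer of h(y) + λ·g(y) over Y satisfies h(y)·g(y) < ε. (Limitation of the λ-oracle.) -/
theorem stmt6 (ε H G : ℝ) (hε : 0 < ε) (hH : 0 < H) (hG : 0 < G) :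
    ∃ Y : Finset (ℝ × ℝ), Y.card = 3 ∧ (∀ y ∈ Y, 0 ≤ y.2) ∧
      (∃ y ∈ Y, (1 / 4) * H * G ≤ y.1 * y.2) ∧
      ∀ l : ℝ, 0 ≤ l → ∀ y ∈ Y,
        (∀ y' ∈ Y, y'.1 + l * y'.2 ≤ y.1 + l * y.2) → y.1 * y.2 < ε := by
  set e : ℝ := min (min (ε / G) (ε / H)) (min H G) / 2 with he
  have he0 : 0 < e := by
    have : 0 < min (min (ε / G) (ε / H)) (min H G) := by
      simp only [lt_min_iff]
      exact ⟨⟨div_pos hε hG, div_pos hε hH⟩, hH, hG⟩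
    linarith
  have heH : e < H := by
    have h1 : min (min (ε / G) (ε / H)) (min H G) ≤ H :=
      le_trans (min_le_right _ _) (min_le_left _ _)
    rw [he]; linarith
  have heG : e < G := by
    have h1 : min (min (ε / G) (ε / H)) (min H G) ≤ G :=
      le_trans (min_le_right _ _) (min_le_right _ _)
    rw [he]; linarith
  have heε1 : e * G < ε := by
    have h1 : e ≤ (ε / G) / 2 := by
      have h0 : min (min (ε / G) (ε / H)) (min H G) ≤ ε / G :=
        le_trans (min_le_left _ _) (min_le_left _ _)
      rw [he]; linarith
    have h2 : e * G ≤ (ε / G) / 2 * G := by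
      exact mul_le_mul_of_nonneg_right h1 hG.le
    have h3 : (ε / G) / 2 * G = ε / 2 := by field_simp
    linarith
  have heε2 : H * e < ε := by
    have h1 : e ≤ (ε / H) / 2 := by
      have h0 : min (min (ε / G) (ε / H)) (min H G) ≤ ε / H :=
        le_trans (min_le_left _ _) (min_le_right _ _)
      rw [he]; linarith
    have h2 : H * e ≤ H * ((ε / H) / 2) := by
      exact mul_le_mul_of_nonneg_left h1 hH.le
    have h3 : H * ((ε / H) / 2) = ε / 2 := by field_simp
    linarith
  refine ⟨{(e, G), (H, e), (H / 2, G / 2)}, ?_, ?_, ?_, ?_⟩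
  · rw [Finset.card_insert_of_notMem, Finset.card_insert_of_notMem,
      Finset.card_singleton]
    · simp only [Finset.mem_singleton, Prod.mk.injEq, not_and]
      intro h; linarith
    · simp only [Finset.mem_insert, Finset.mem_singleton, Prod.mk.injEq, not_or, not_and]
      constructor
      · intro h; linarith
      · intro h; linarith
  · intro y hy
    simp only [Finset.mem_insert, Finset.mem_singleton] at hy
    rcases hy with rfl | rfl | rfl <;> simp <;> linarith
  · refine ⟨(H / 2, G / 2), by simp, by nlinarith⟩
  · intro l hl y hy hmax
    simp only [Finset.mem_insert, Finset.mem_singleton] at hy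
    rcases hy with rfl | rfl | rfl
    · simpa using heε1
    · simpa using heε2
    · exfalso
      have h1 := hmax (e, G) (by simp)
      have h2 := hmax (H, e) (by simp)
      simp only at h1 h2
      nlinarith
end

section
/- Let 0 < β ≤ α, λ = 1/√(α·β), and let z = (z₁, z₂) ∈ ℝ² with z₁, z₂ > 0 and β ≤ z₂/z₁ ≤ α. Define z' = (λ·z₂, z₁/λ) and r = (√(λ·z₁·z₂), √(z₁·z₂/λ)). Then the slopes satisfy β ≤ min(∂z, ∂z') ≤ ∂r ≤ max(∂z, ∂z') ≤ α, where ∂p = p₂/p₁. -/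
theorem stmt7 (α β : ℝ) (hβ : 0 < β) (hβα : β ≤ α) (l : ℝ)
    (hl : l = 1 / Real.sqrt (α * β)) (z : ℝ × ℝ) (hz1 : 0 < z.1) (hz2 : 0 < z.2)
    (hlo : β ≤ z.2 / z.1) (hhi : z.2 / z.1 ≤ α) :
    β ≤ min (z.2 / z.1) ((z.1 / l) / (l * z.2)) ∧
      min (z.2 / z.1) ((z.1 / l) / (l * z.2)) ≤
        Real.sqrt (z.1 * z.2 / l) / Real.sqrt (l * z.1 * z.2) ∧
      Real.sqrt (z.1 * z.2 / l) / Real.sqrt (l * z.1 * z.2) ≤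
        max (z.2 / z.1) ((z.1 / l) / (l * z.2)) ∧
      max (z.2 / z.1) ((z.1 / l) / (l * z.2)) ≤ α := by
  have hαβ : 0 < α * β := mul_pos (lt_of_lt_of_le hβ hβα) hβ
  have ha : 0 < Real.sqrt (α * β) := Real.sqrt_pos.mpr hαβ
  set a := Real.sqrt (α * β) with ha_def
  have ha2 : a ^ 2 = α * β := Real.sq_sqrt hαβ.le
  have hlpos : 0 < l := by rw [hl]; positivity
  have hla : l * a = 1 := by rw [hl]; field_simp
  have hl2 : l ^ 2 * a ^ 2 = 1 := by nlinarith [hla]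
  set s := z.2 / z.1 with hs_def
  have hspos : 0 < s := div_pos hz2 hz1
  -- slope of z'
  have hz' : (z.1 / l) / (l * z.2) = (α * β) / s := by
    rw [← ha2, hs_def]
    field_simp
    nlinarith [hl2, mul_pos hz1 hz2, sq_nonneg (z.1*z.2)]
  -- slope of r equals a
  have hkey : z.1 * z.2 / l = a ^ 2 * (l * z.1 * z.2) := by
    field_simp
    nlinarith [hl2, mul_pos hz1 hz2]
  have hr : Real.sqrt (z.1 * z.2 / l) / Real.sqrt (l * z.1 * z.2) = a := by
    rw [hkey, Real.sqrt_mul (sq_nonneg a), Real.sqrt_sq ha.le, mul_div_assoc,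
      div_self (by positivity : Real.sqrt (l * z.1 * z.2) ≠ 0), mul_one]
  rw [hz', hr]
  have h1 : β ≤ α * β / s := by
    rw [le_div_iff₀ hspos]; nlinarith
  have h2 : α * β / s ≤ α := by
    rw [div_le_iff₀ hspos]; nlinarith
  refine ⟨le_min hlo h1, ?_, ?_, max_le hhi h2⟩
  · rcases le_total s a with h | h
    · exact le_trans (min_le_left _ _) h
    · refine le_trans (min_le_right _ _) ?_
      rw [div_le_iff₀ hspos]
      nlinarith [ha2]
  · rcases le_total s a with h | h
    · refine le_trans ?_ (le_max_right _ _)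
      rw [le_div_iff₀ hspos]
      nlinarith [ha2]
    · exact le_trans h (le_max_left _ _)
end

section
/- Define v(α, β) = √(α/β) for 0 < β ≤ α, and for a split with λ = 1/√(αβ) and point z with slope γ = z₂/z₁ ∈ [β, α], define α⁺ = max(γ, αβ/γ) and β⁺ = min(γ, αβ/γ). Then √(α⁺/β⁺) ≤ √(α/β), and each of the two sub-angles obtained by inserting the geometric-mean slope √(αβ) has capacity equal to the square root of v(α⁺, β⁺). -/
lemma aux_div_sqrt (a b : ℝ) (ha : 0 < a) (hb : 0 < b) :
    a / Real.sqrt (a * b) = Real.sqrt (a / b) := by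
  rw [Real.sqrt_mul ha.le, Real.sqrt_div ha.le]
  rw [div_mul_eq_div_div, Real.div_sqrt]

lemma aux_sqrt_div (a b : ℝ) (ha : 0 < a) (hb : 0 < b) :
    Real.sqrt (a * b) / b = Real.sqrt (a / b) := by
  rw [Real.sqrt_mul ha.le, Real.sqrt_div ha.le]
  rw [mul_div_assoc]
  congr 1
  rw [Real.sqrt_div_self', one_div]

theorem stmt8 (α β γ : ℝ) (hβ : 0 < β) (hβα : β ≤ α) (hγ1 : β ≤ γ) (hγ2 : γ ≤ α) :
    Real.sqrt (max γ (α * β / γ) / min γ (α * β / γ)) ≤ Real.sqrt (α / β) ∧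
      (Real.sqrt (max γ (α * β / γ) /
          Real.sqrt (max γ (α * β / γ) * min γ (α * β / γ)))) ^ 2 =
        Real.sqrt (max γ (α * β / γ) / min γ (α * β / γ)) ∧
      (Real.sqrt (Real.sqrt (max γ (α * β / γ) * min γ (α * β / γ)) /
          min γ (α * β / γ))) ^ 2 =
        Real.sqrt (max γ (α * β / γ) / min γ (α * β / γ)) := by
  have hγ : 0 < γ := hβ.trans_le hγ1
  have hα : 0 < α := hβ.trans_le hβα
  have hq : 0 < α * β / γ := by positivity
  set a := max γ (α * β / γ) with ha_def
  set b := min γ (α * β / γ) with hb_def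
  have ha : 0 < a := lt_max_of_lt_left hγ
  have hb : 0 < b := lt_min hγ hq
  refine ⟨?_, ?_, ?_⟩
  · apply Real.sqrt_le_sqrt
    rw [div_le_div_iff₀ hb hβ]
    rcases max_cases γ (α * β / γ) with ⟨h1, h2⟩ | ⟨h1, h2⟩
    · have hbm : b = α * β / γ := min_eq_right h2
      have ham : a = γ := h1
      rw [ham, hbm]
      have h3 : α * (α * β / γ) = α * α * β / γ := by ring
      rw [h3, le_div_iff₀ hγ]
      nlinarith [mul_le_mul_of_nonneg_right (mul_self_le_mul_self hγ.le hγ2) hβ.le]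
    · have hbm : b = γ := min_eq_left h2.le
      have ham : a = α * β / γ := h1
      rw [ham, hbm, div_mul_eq_mul_div, div_le_iff₀ hγ]
      nlinarith [mul_le_mul_of_nonneg_left (mul_self_le_mul_self hβ.le hγ1) hα.le]
  · rw [Real.sq_sqrt (by positivity), aux_div_sqrt a b ha hb]
  · rw [Real.sq_sqrt (by positivity), aux_sqrt_div a b ha hb]
end

section
/- Let 0 < β ≤ α, λ = 1/√(αβ), and let z ∈ ℝ² with z₁, z₂ > 0 and β ≤ z₂/z₁ ≤ α. For any point m on the segment from z to z' = (λ·z₂, z₁/λ), m₁·m₂ ≤ (1/4)·(√(α/β) + √(β/α))²·z₁·z₂. (Suboptimality bound of an angular split.) -/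
/-!
Write `s = √(αβ)` and `z' = (z₂/s, s z₁)`, so that `z'₁ z'₂ = z₁ z₂ =: P`. Along the segment,
`m₁ m₂ = P + t(1-t)(z₁ z'₂ + z₂ z'₁ - 2P)`, and the bracket is nonnegative by AM-GM, so the
product is largest at `t = 1/2`, where it equals `P (2 + y + y⁻¹) / 4` with `y = z₂ / (s z₁)`.
The cone condition `β ≤ z₂/z₁ ≤ α` says exactly that `y ∈ [v⁻¹, v]` for `v = √(α/β)`, and there
`y + y⁻¹ ≤ v + v⁻¹ ≤ v² + v⁻²`.
-/

open Real Set

theorem convexComb_mul_convexComb_le_of_mul_eq {a b c d t : ℝ} (ha : 0 ≤ a) (hb : 0 ≤ b)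
    (hc : 0 ≤ c) (hd : 0 ≤ d) (habcd : a * b = c * d) (ht : t ∈ Icc (0 : ℝ) 1) :
    (t * a + (1 - t) * c) * (t * b + (1 - t) * d) ≤ (a + c) * (b + d) / 4 := by
  obtain ⟨ht0, ht1⟩ := ht
  have hamgm : 2 * (a * b) ≤ a * d + b * c := by
    nlinarith [sq_nonneg (a * d - b * c), mul_nonneg ha hd, mul_nonneg hb hc, mul_nonneg ha hb]
  have hquarter : t * (1 - t) ≤ 1 / 4 := by nlinarith [sq_nonneg (2 * t - 1)]
  calc (t * a + (1 - t) * c) * (t * b + (1 - t) * d)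
      = a * b + t * (1 - t) * (a * d + b * c - 2 * (a * b)) := by
        linear_combination (-(1 - t) ^ 2) * habcd
    _ ≤ a * b + 1 / 4 * (a * d + b * c - 2 * (a * b)) := by gcongr
    _ = (a + c) * (b + d) / 4 := by linear_combination (1 / 4 : ℝ) * habcd

theorem add_inv_le_add_inv_of_mem_Icc {v y : ℝ} (hv : 0 < v) (hy : y ∈ Icc v⁻¹ v) :
    y + y⁻¹ ≤ v + v⁻¹ := by
  obtain ⟨hlo, hhi⟩ := hy
  have hy0 : 0 < y := (inv_pos.2 hv).trans_le hlo
  have key : y * y + 1 ≤ (v + v⁻¹) * y := by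
    nlinarith [mul_nonneg (sub_nonneg.2 hlo) (sub_nonneg.2 hhi), mul_inv_cancel₀ hv.ne']
  calc y + y⁻¹ = (y * y + 1) / y := by field_simp
    _ ≤ v + v⁻¹ := (div_le_iff₀ hy0).2 key

theorem add_inv_le_sq_add_inv_sq {v : ℝ} (hv : 0 < v) : v + v⁻¹ ≤ v ^ 2 + (v ^ 2)⁻¹ := by
  have hw : 2 ≤ v + v⁻¹ := by
    nlinarith [mul_nonneg (inv_pos.2 hv).le (sq_nonneg (v - 1)), mul_inv_cancel₀ hv.ne']
  have hsq : v ^ 2 + (v ^ 2)⁻¹ = (v + v⁻¹) ^ 2 - 2 := by field_simp; ring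
  nlinarith

theorem midpoint_mul_le_of_div_mem_Icc {z₁ z₂ s v : ℝ} (hz₁ : 0 < z₁) (hz₂ : 0 < z₂)
    (hs : 0 < s) (hv : 0 < v) (hy : z₂ / (s * z₁) ∈ Icc v⁻¹ v) :
    (z₁ + s⁻¹ * z₂) * (z₂ + z₁ * s) / 4 ≤ 1 / 4 * (v + v⁻¹) ^ 2 * (z₁ * z₂) := by
  set y := z₂ / (s * z₁) with hy_def
  have hexpand : (z₁ + s⁻¹ * z₂) * (z₂ + z₁ * s) = (y + y⁻¹ + 2) * (z₁ * z₂) := by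
    rw [hy_def]; field_simp; ring
  have hsq : (v + v⁻¹) ^ 2 = v ^ 2 + (v ^ 2)⁻¹ + 2 := by field_simp; ring
  rw [hexpand, hsq]
  have := (add_inv_le_add_inv_of_mem_Icc hv hy).trans (add_inv_le_sq_add_inv_sq hv)
  nlinarith [mul_le_mul_of_nonneg_right this (mul_pos hz₁ hz₂).le]

theorem stmt9 (α β : ℝ) (hβ : 0 < β) (hβα : β ≤ α) (l : ℝ)
    (hl : l = 1 / Real.sqrt (α * β)) (z1 z2 : ℝ) (hz1 : 0 < z1) (hz2 : 0 < z2)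
    (hlo : β ≤ z2 / z1) (hhi : z2 / z1 ≤ α) (t : ℝ) (ht : t ∈ Set.Icc (0 : ℝ) 1) :
    (t * z1 + (1 - t) * (l * z2)) * (t * z2 + (1 - t) * (z1 / l)) ≤
      (1 / 4) * (Real.sqrt (α / β) + Real.sqrt (β / α)) ^ 2 * (z1 * z2) := by
  have hα : 0 < α := hβ.trans_le hβα
  set s := √(α * β)
  set v := √(α / β)
  have hs : 0 < s := sqrt_pos.2 (mul_pos hα hβ)
  have hv : 0 < v := sqrt_pos.2 (div_pos hα hβ)
  have hl' : l = s⁻¹ := by rw [hl, one_div]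
  have hv_inv : √(β / α) = v⁻¹ := by rw [← sqrt_inv, inv_div]
  have hsv : s * v = α := by
    rw [← sqrt_mul (mul_pos hα hβ).le, show α * β * (α / β) = α * α by field_simp,
      sqrt_mul_self hα.le]
  have hsv_inv : s * v⁻¹ = β := by
    rw [← sqrt_inv, inv_div, ← sqrt_mul (mul_pos hα hβ).le,
      show α * β * (β / α) = β * β by field_simp, sqrt_mul_self hβ.le]
  have hy : z2 / (s * z1) ∈ Icc v⁻¹ v := by
    rw [mul_comm, ← div_div, mem_Icc, le_div_iff₀ hs, div_le_iff₀ hs, mul_comm v⁻¹, hsv_inv,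
      mul_comm v, hsv]
    exact ⟨hlo, hhi⟩
  rw [hv_inv, hl', div_inv_eq_mul]
  calc _ ≤ (z1 + s⁻¹ * z2) * (z2 + z1 * s) / 4 :=
        convexComb_mul_convexComb_le_of_mul_eq hz1.le hz2.le (by positivity) (by positivity)
          (by field_simp) ht
    _ ≤ _ := midpoint_mul_le_of_div_mem_Icc hz1 hz2 hs hv hy
end

section
/- Let ψ : ℝ² → ℝ be quasi-concave and strictly monotone in the sense that ψ(a + ε, b + ε) > ψ(a, b) for all ε > 0, and let Y ⊆ ℝ² be a finite set. Then any maximizer of ψ over the convex hull of Y lies on the topological boundary of the convex hull; moreover it is a convex combination of at most two points of Y. -/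
/-!
A maximizer `x` of `ψ` cannot be interior: `ψ` increases strictly from `x` along `(1, 1)`.
So `x` lies on the boundary of the convex polygon and has a supporting line `f = f x`.
By Carathéodory, `x` is a positive combination of affinely independent points of `Y`;
positivity of the weights forces them all onto the supporting line, which is one-dimensional,
so there are at most two of them.
-/

open Set Finset Module Filter Topology

theorem IsMaxOn.notMem_interior_of_forall_lt_add_smul {E : Type*} [TopologicalSpace E]
    [AddCommGroup E] [Module ℝ E] [ContinuousAdd E] [ContinuousSMul ℝ E]
    {ψ : E → ℝ} {S : Set E} {x v : E} (hmax : IsMaxOn ψ S x)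
    (hψ : ∀ ε : ℝ, 0 < ε → ψ x < ψ (x + ε • v)) : x ∉ interior S := by
  intro hx
  have hpath : Tendsto (fun ε : ℝ => x + ε • v) (𝓝[>] 0) (𝓝 x) := by
    have hcont : Continuous fun ε : ℝ => x + ε • v := by fun_prop
    simpa using (hcont.tendsto 0).mono_left nhdsWithin_le_nhds
  obtain ⟨ε, hεS, hε⟩ :=
    ((hpath.eventually (isOpen_interior.mem_nhds hx)).and self_mem_nhdsWithin).exists
  exact (hψ ε hε).not_ge (hmax (interior_subset hεS))

theorem Convex.exists_dual_ne_zero_le_of_notMem_interior {E : Type*} [NormedAddCommGroup E]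
    [NormedSpace ℝ E] [FiniteDimensional ℝ E] {A : Set E} {x : E} (hA : Convex ℝ A)
    (hxA : x ∈ A) (hxint : x ∉ interior A) : ∃ f : Dual ℝ E, f ≠ 0 ∧ ∀ a ∈ A, f a ≤ f x := by
  rcases (interior A).eq_empty_or_nonempty with hint | hint
  · have hspan : affineSpan ℝ A ≠ ⊤ := fun h => by
      simpa [hint] using hA.interior_nonempty_iff_affineSpan_eq_top.2 h
    have hdir : (affineSpan ℝ A).direction < ⊤ := lt_top_iff_ne_top.2 fun h =>
      hspan ((AffineSubspace.direction_eq_top_iff_of_nonempty ⟨x, subset_affineSpan ℝ A hxA⟩).1 h)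
    obtain ⟨f, hf, hker⟩ := (affineSpan ℝ A).direction.exists_le_ker_of_lt_top hdir
    refine ⟨f, hf, fun a ha => (sub_eq_zero.1 ?_).le⟩
    rw [← map_sub]
    exact hker (AffineSubspace.vsub_mem_direction (subset_affineSpan ℝ A ha)
      (subset_affineSpan ℝ A hxA))
  · obtain ⟨f, hf, hle⟩ := geometric_hahn_banach_of_nonempty_interior_point hA hxint hint
    exact ⟨f.toLinearMap, fun h => hf (ContinuousLinearMap.coe_injective h), hle⟩

theorem AffineIndependent.card_le_finrank_of_forall_apply_eq {K V ι : Type*} [Field K]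
    [AddCommGroup V] [Module K V] [FiniteDimensional K V] [Fintype ι] {z : ι → V}
    (hz : AffineIndependent K z) {f : Dual K V} (hf : f ≠ 0) {c : K}
    (hzc : ∀ i, f (z i) = c) : Fintype.card ι ≤ finrank K V := by
  have hspan : vectorSpan K (range z) ≤ LinearMap.ker f := by
    rw [vectorSpan_def, Submodule.span_le]
    rintro _ ⟨_, ⟨i, rfl⟩, _, ⟨j, rfl⟩, rfl⟩
    simp [hzc]
  calc Fintype.card ι ≤ finrank K (vectorSpan K (range z)) + 1 := hz.card_le_finrank_succ
    _ ≤ finrank K (LinearMap.ker f) + 1 := by gcongr; exact Submodule.finrank_mono hspan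
    _ = finrank K V := f.finrank_ker_add_one_of_ne_zero hf

theorem exists_finset_card_le_finrank_mem_convexHull_of_le {𝕜 E : Type*} [Field 𝕜]
    [LinearOrder 𝕜] [IsStrictOrderedRing 𝕜] [AddCommGroup E] [Module 𝕜 E] [FiniteDimensional 𝕜 E]
    {s : Set E} {x : E} (hx : x ∈ convexHull 𝕜 s) {f : Dual 𝕜 E} (hf : f ≠ 0)
    (hfs : ∀ y ∈ s, f y ≤ f x) :
    ∃ t : Finset E, ↑t ⊆ s ∧ #t ≤ finrank 𝕜 E ∧ x ∈ convexHull 𝕜 ↑t := by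
  classical
  obtain ⟨ι, _, z, w, hzs, hz, hw0, hw1, hwz⟩ := eq_pos_convex_span_of_mem_convexHull hx
  have hle : ∀ i, w i * f (z i) ≤ w i * f x := fun i =>
    mul_le_mul_of_nonneg_left (hfs _ (hzs (mem_range_self i))) (hw0 i).le
  have hface : ∀ i, f (z i) = f x := by
    have hsum : ∑ i, w i * f (z i) = ∑ i, w i * f x := by
      rw [← sum_mul, hw1, one_mul, ← hwz]
      simp [map_sum]
    intro i
    exact mul_left_cancel₀ (hw0 i).ne'
      ((sum_eq_sum_iff_of_le fun i _ => hle i).1 hsum i (mem_univ i))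
  refine ⟨univ.image z, by simpa [Set.range_subset_iff] using hzs, ?_, ?_⟩
  · exact card_image_le.trans (hz.card_le_finrank_of_forall_apply_eq hf hface)
  · rw [← hwz, ← univ.centerMass_eq_of_sum_1 z hw1]
    exact univ.centerMass_mem_convexHull (fun i _ => (hw0 i).le) (by simp [hw1])
      (fun i _ => by simp)

theorem Finset.exists_mem_segment_of_card_le_two {𝕜 E : Type*} [Field 𝕜] [LinearOrder 𝕜]
    [IsStrictOrderedRing 𝕜] [AddCommGroup E] [Module 𝕜 E] {t : Finset E} {x : E} (ht : #t ≤ 2)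
    (hx : x ∈ convexHull 𝕜 (t : Set E)) : ∃ a ∈ t, ∃ b ∈ t, x ∈ segment 𝕜 a b := by
  classical
  interval_cases h : #t
  · simp_all
  · obtain ⟨a, rfl⟩ := card_eq_one.1 h
    rw [coe_singleton, convexHull_singleton] at hx
    exact ⟨a, mem_singleton_self a, a, mem_singleton_self a, by simpa using hx⟩
  · obtain ⟨a, b, -, rfl⟩ := card_eq_two.1 h
    rw [coe_pair, convexHull_pair] at hx
    exact ⟨a, by simp, b, by simp, hx⟩

theorem stmt11_general (ψ : ℝ × ℝ → ℝ)
    (hmono : ∀ p : ℝ × ℝ, ∀ ε : ℝ, 0 < ε → ψ p < ψ (p.1 + ε, p.2 + ε))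
    (Y : Finset (ℝ × ℝ)) (x : ℝ × ℝ)
    (hx : x ∈ convexHull ℝ (Y : Set (ℝ × ℝ)))
    (hmax : ∀ p ∈ convexHull ℝ (Y : Set (ℝ × ℝ)), ψ p ≤ ψ x) :
    x ∈ frontier (convexHull ℝ (Y : Set (ℝ × ℝ))) ∧
      ∃ y₁ ∈ Y, ∃ y₂ ∈ Y, ∃ t : ℝ, t ∈ Set.Icc (0 : ℝ) 1 ∧
        x = t • y₁ + (1 - t) • y₂ := by
  have hint : x ∉ interior (convexHull ℝ (Y : Set (ℝ × ℝ))) :=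
    (isMaxOn_iff.2 hmax).notMem_interior_of_forall_lt_add_smul (v := (1, 1)) fun ε hε => by
      convert hmono x ε hε using 2
      ext <;> simp
  refine ⟨(Y.finite_toSet.isClosed_convexHull (𝕜 := ℝ)).frontier_eq ▸ ⟨hx, hint⟩, ?_⟩
  obtain ⟨f, hf, hfx⟩ := (convex_convexHull ℝ _).exists_dual_ne_zero_le_of_notMem_interior hx hint
  obtain ⟨t, htY, htcard, hxt⟩ := exists_finset_card_le_finrank_mem_convexHull_of_le hx hf
    fun y hy => hfx y (subset_convexHull ℝ _ hy)
  obtain ⟨a, ha, b, hb, u, v, hu, hv, huv, rfl⟩ :=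
    exists_mem_segment_of_card_le_two (htcard.trans_eq (by simp)) hxt
  exact ⟨a, htY ha, b, htY hb, u, ⟨hu, by linarith⟩, by rw [← huv, add_sub_cancel_left]⟩

theorem stmt11 (ψ : ℝ × ℝ → ℝ) (hcont : Continuous ψ)
    (hqc : ∀ c : ℝ, Convex ℝ {p : ℝ × ℝ | c ≤ ψ p})
    (hmono : ∀ p : ℝ × ℝ, ∀ ε : ℝ, 0 < ε → ψ p < ψ (p.1 + ε, p.2 + ε))
    (Y : Finset (ℝ × ℝ)) (x : ℝ × ℝ)
    (hx : x ∈ convexHull ℝ (Y : Set (ℝ × ℝ)))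
    (hmax : ∀ p ∈ convexHull ℝ (Y : Set (ℝ × ℝ)), ψ p ≤ ψ x) :
    x ∈ frontier (convexHull ℝ (Y : Set (ℝ × ℝ))) ∧
      ∃ y₁ ∈ Y, ∃ y₂ ∈ Y, ∃ t : ℝ, t ∈ Set.Icc (0 : ℝ) 1 ∧
        x = t • y₁ + (1 - t) • y₂ :=
  stmt11_general ψ hmono Y x hx hmax
end

section
/- Factor scaling: if U ∈ ℝ^{Y×d} has rows a_i·u for scalars a_i and a fixed vector u ≠ 0, then ‖U‖_s = (max_i |a_i|)·‖u‖₂, while ‖U‖_F = ‖U‖_* = ‖a‖₂·‖u‖₂. -/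
noncomputable def maxRowNorm {m n : ℕ} (M : Matrix (Fin m) (Fin n) ℝ) : ℝ :=
  ⨆ i : Fin m, Real.sqrt (∑ j, (M i j) ^ 2)

noncomputable def frobNorm {m n : ℕ} (M : Matrix (Fin m) (Fin n) ℝ) : ℝ :=
  Real.sqrt (∑ i, ∑ j, (M i j) ^ 2)

noncomputable def sharedNorm {r c : ℕ} (U : Matrix (Fin r) (Fin c) ℝ) : ℝ :=
  sInf {x : ℝ | ∃ n : ℕ, ∃ A : Matrix (Fin r) (Fin n) ℝ,
    ∃ V : Matrix (Fin n) (Fin c) ℝ, A * V = U ∧ x = maxRowNorm A * frobNorm V}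

noncomputable def nucNorm {r c : ℕ} (U : Matrix (Fin r) (Fin c) ℝ) : ℝ :=
  sInf {x : ℝ | ∃ n : ℕ, ∃ A : Matrix (Fin r) (Fin n) ℝ,
    ∃ V : Matrix (Fin n) (Fin c) ℝ, A * V = U ∧ x = frobNorm A * frobNorm V}

/-! Each factorization norm of `U` is at least the corresponding norm of `U` itself, by
Cauchy–Schwarz row by row (`‖(A V)ᵢ‖₂ ≤ ‖Aᵢ‖₂ ‖V‖_F`), and at most the value of any one
factorization. For `U = a uᵀ` the factorization through a single column attains the lower bound:
`‖a uᵀ‖_{2→∞} = (maxᵢ |aᵢ|) ‖u‖₂ = ‖a‖_{2→∞} ‖uᵀ‖_F` and `‖a uᵀ‖_F = ‖a‖₂ ‖u‖₂`. -/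

open Matrix

section Norms

variable {m n c : ℕ}

lemma maxRowNorm_nonneg (M : Matrix (Fin m) (Fin n) ℝ) : 0 ≤ maxRowNorm M :=
  Real.iSup_nonneg fun _ => Real.sqrt_nonneg _

lemma frobNorm_nonneg (M : Matrix (Fin m) (Fin n) ℝ) : 0 ≤ frobNorm M :=
  Real.sqrt_nonneg _

lemma sqrt_sum_sq_row_le_maxRowNorm (M : Matrix (Fin m) (Fin n) ℝ) (i : Fin m) :
    Real.sqrt (∑ j, M i j ^ 2) ≤ maxRowNorm M :=
  le_ciSup (f := fun i => Real.sqrt (∑ j, M i j ^ 2)) (Set.finite_range _).bddAbove i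

lemma sum_sq_vecMul_le (x : Fin n → ℝ) (V : Matrix (Fin n) (Fin c) ℝ) :
    ∑ j, (∑ k, x k * V k j) ^ 2 ≤ (∑ k, x k ^ 2) * ∑ k, ∑ j, V k j ^ 2 :=
  calc ∑ j, (∑ k, x k * V k j) ^ 2
      ≤ ∑ j, (∑ k, x k ^ 2) * ∑ k, V k j ^ 2 :=
        Finset.sum_le_sum fun j _ => Finset.sum_mul_sq_le_sq_mul_sq _ _ _
    _ = (∑ k, x k ^ 2) * ∑ k, ∑ j, V k j ^ 2 := by
        rw [← Finset.mul_sum, Finset.sum_comm]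

lemma sqrt_sum_sq_row_mul_le (A : Matrix (Fin m) (Fin n) ℝ) (V : Matrix (Fin n) (Fin c) ℝ)
    (i : Fin m) :
    Real.sqrt (∑ j, (A * V) i j ^ 2) ≤ Real.sqrt (∑ k, A i k ^ 2) * frobNorm V := by
  rw [frobNorm, ← Real.sqrt_mul (Finset.sum_nonneg fun _ _ => sq_nonneg _)]
  simp only [Matrix.mul_apply]
  exact Real.sqrt_le_sqrt (sum_sq_vecMul_le (A i) V)

lemma maxRowNorm_mul_le (A : Matrix (Fin m) (Fin n) ℝ) (V : Matrix (Fin n) (Fin c) ℝ) :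
    maxRowNorm (A * V) ≤ maxRowNorm A * frobNorm V :=
  Real.iSup_le
    (fun i => (sqrt_sum_sq_row_mul_le A V i).trans <| mul_le_mul_of_nonneg_right
      (sqrt_sum_sq_row_le_maxRowNorm A i) (frobNorm_nonneg V))
    (mul_nonneg (maxRowNorm_nonneg A) (frobNorm_nonneg V))

lemma frobNorm_mul_le (A : Matrix (Fin m) (Fin n) ℝ) (V : Matrix (Fin n) (Fin c) ℝ) :
    frobNorm (A * V) ≤ frobNorm A * frobNorm V := by
  simp only [frobNorm, Matrix.mul_apply]
  rw [← Real.sqrt_mul (x := ∑ i, ∑ k, A i k ^ 2) (by positivity), Finset.sum_mul]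
  exact Real.sqrt_le_sqrt (Finset.sum_le_sum fun i _ => sum_sq_vecMul_le (A i) V)

end Norms

section FactorizationNorms

variable {r c : ℕ}

lemma sharedNorm_le_of_mul_eq {n : ℕ} {U : Matrix (Fin r) (Fin c) ℝ}
    {A : Matrix (Fin r) (Fin n) ℝ} {V : Matrix (Fin n) (Fin c) ℝ} (h : A * V = U) :
    sharedNorm U ≤ maxRowNorm A * frobNorm V :=
  csInf_le ⟨0, by
    rintro _ ⟨_, A', V', _, rfl⟩
    exact mul_nonneg (maxRowNorm_nonneg A') (frobNorm_nonneg V')⟩ ⟨n, A, V, h, rfl⟩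

lemma maxRowNorm_le_sharedNorm (U : Matrix (Fin r) (Fin c) ℝ) : maxRowNorm U ≤ sharedNorm U :=
  le_csInf ⟨_, r, 1, U, Matrix.one_mul U, rfl⟩ <| by
    rintro _ ⟨_, A, V, rfl, rfl⟩
    exact maxRowNorm_mul_le A V

lemma nucNorm_le_of_mul_eq {n : ℕ} {U : Matrix (Fin r) (Fin c) ℝ}
    {A : Matrix (Fin r) (Fin n) ℝ} {V : Matrix (Fin n) (Fin c) ℝ} (h : A * V = U) :
    nucNorm U ≤ frobNorm A * frobNorm V :=
  csInf_le ⟨0, by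
    rintro _ ⟨_, A', V', _, rfl⟩
    exact mul_nonneg (frobNorm_nonneg A') (frobNorm_nonneg V')⟩ ⟨n, A, V, h, rfl⟩

lemma frobNorm_le_nucNorm (U : Matrix (Fin r) (Fin c) ℝ) : frobNorm U ≤ nucNorm U :=
  le_csInf ⟨_, r, 1, U, Matrix.one_mul U, rfl⟩ <| by
    rintro _ ⟨_, A, V, rfl, rfl⟩
    exact frobNorm_mul_le A V

end FactorizationNorms

section RankOne

variable {r c : ℕ} (a : Fin r → ℝ) (u : Fin c → ℝ)

lemma maxRowNorm_vecMulVec :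
    maxRowNorm (vecMulVec a u) = (⨆ i, |a i|) * Real.sqrt (∑ j, u j ^ 2) := by
  rw [Real.iSup_mul_of_nonneg (Real.sqrt_nonneg _), maxRowNorm]
  congr 1 with i
  simp only [vecMulVec_apply, mul_pow, ← Finset.mul_sum]
  rw [Real.sqrt_mul (sq_nonneg _), Real.sqrt_sq_eq_abs]

lemma frobNorm_vecMulVec :
    frobNorm (vecMulVec a u) = Real.sqrt (∑ i, a i ^ 2) * Real.sqrt (∑ j, u j ^ 2) := by
  simp only [frobNorm, vecMulVec_apply, mul_pow, ← Finset.mul_sum, ← Finset.sum_mul]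
  exact Real.sqrt_mul (Finset.sum_nonneg fun _ _ => sq_nonneg _) _

lemma maxRowNorm_replicateCol : maxRowNorm (replicateCol (Fin 1) a) = ⨆ i, |a i| := by
  simp [maxRowNorm, Real.sqrt_sq_eq_abs]

lemma frobNorm_replicateCol : frobNorm (replicateCol (Fin 1) a) = Real.sqrt (∑ i, a i ^ 2) := by
  simp [frobNorm]

lemma frobNorm_replicateRow : frobNorm (replicateRow (Fin 1) u) = Real.sqrt (∑ j, u j ^ 2) := by
  simp [frobNorm]

lemma sharedNorm_vecMulVec : sharedNorm (vecMulVec a u) = maxRowNorm (vecMulVec a u) := by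
  refine le_antisymm ?_ (maxRowNorm_le_sharedNorm _)
  calc sharedNorm (vecMulVec a u)
      ≤ maxRowNorm (replicateCol (Fin 1) a) * frobNorm (replicateRow (Fin 1) u) :=
        sharedNorm_le_of_mul_eq (vecMulVec_eq (Fin 1) a u).symm
    _ = maxRowNorm (vecMulVec a u) := by
        rw [maxRowNorm_replicateCol, frobNorm_replicateRow, maxRowNorm_vecMulVec]

lemma nucNorm_vecMulVec : nucNorm (vecMulVec a u) = frobNorm (vecMulVec a u) := by
  refine le_antisymm ?_ (frobNorm_le_nucNorm _)
  calc nucNorm (vecMulVec a u)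
      ≤ frobNorm (replicateCol (Fin 1) a) * frobNorm (replicateRow (Fin 1) u) :=
        nucNorm_le_of_mul_eq (vecMulVec_eq (Fin 1) a u).symm
    _ = frobNorm (vecMulVec a u) := by
        rw [frobNorm_replicateCol, frobNorm_replicateRow, frobNorm_vecMulVec]

end RankOne

theorem stmt17_general (Y d : ℕ) (a : Fin Y → ℝ) (u : Fin d → ℝ)
    (U : Matrix (Fin Y) (Fin d) ℝ)
    (hU : ∀ i j, U i j = a i * u j) :
    sharedNorm U = (⨆ i : Fin Y, |a i|) * Real.sqrt (∑ j, (u j) ^ 2) ∧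
      frobNorm U = Real.sqrt (∑ i, (a i) ^ 2) * Real.sqrt (∑ j, (u j) ^ 2) ∧
      nucNorm U = Real.sqrt (∑ i, (a i) ^ 2) * Real.sqrt (∑ j, (u j) ^ 2) := by
  obtain rfl : U = vecMulVec a u := Matrix.ext hU
  exact ⟨(sharedNorm_vecMulVec a u).trans (maxRowNorm_vecMulVec a u), frobNorm_vecMulVec a u,
    (nucNorm_vecMulVec a u).trans (frobNorm_vecMulVec a u)⟩

theorem stmt17 (Y d : ℕ) (hY : 0 < Y) (a : Fin Y → ℝ) (u : Fin d → ℝ)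
    (hu : u ≠ 0) (U : Matrix (Fin Y) (Fin d) ℝ)
    (hU : ∀ i j, U i j = a i * u j) :
    sharedNorm U = (⨆ i : Fin Y, |a i|) * Real.sqrt (∑ j, (u j) ^ 2) ∧
      frobNorm U = Real.sqrt (∑ i, (a i) ^ 2) * Real.sqrt (∑ j, (u j) ^ 2) ∧
      nucNorm U = Real.sqrt (∑ i, (a i) ^ 2) * Real.sqrt (∑ j, (u j) ^ 2) :=
  stmt17_general Y d a u U hU
end
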